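/- Fix an integer K ≥ 1, positive reals β_SR,1,…,β_SR,K and β_RD,1,…,β_RD,K, E_S > 0, k ∈ {1,…,K}, and t ∈ (0,1]. For E_R > 0 define ν(E_R) = E_S E_R t² / [ E_S t X + Y + E_R t Z ] and ν_p(E_R) = E_S E_R / [ E_S X + Y + E_R Z ], where X = ∑_{i=1}^K β_SR,i² β_RD,i/(β_SR,k² β_RD,k²), Y = (∑_{m=1}^K β_SR,m β_RD,m)/(β_SR,k² β_RD,k²), and Z = 1/β_SR,k. Then lim_{E_R → 0⁺} log(1+ν(E_R)) / log(1+ν_p(E_R)) = t² ( E_S ∑_{m=1}^K β_SR,m² β_RD,m + ∑_{m=1}^K β_SR,m β_RD,m ) / ( t E_S ∑_{m=1}^K β_SR,m² β_RD,m + ∑_{m=1}^K β_SR,m β_RD,m ). -/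

import Mathlib

/-!
As `E_R → 0` both SINRs are linear-fractional functions of `E_R` vanishing at `0`, and
`log (1 + x) ~ x` at `0`; so the rate ratio tends to the ratio of the slopes of the two SINRs at
`0`, namely `(E_S t² / (E_S t X + Y)) / (E_S / (E_S X + Y))`.
-/

open Filter Topology

lemma Real.tendsto_log_one_add_div_self :
    Tendsto (fun x : ℝ => Real.log (1 + x) / x) (𝓝[≠] 0) (𝓝 1) := by
  simpa [div_eq_inv_mul] using (Real.hasDerivAt_log one_ne_zero).tendsto_slope_zero

lemma tendsto_log_one_add_div_log_one_add {α : Type*} {l : Filter α} {f g : α → ℝ} {L : ℝ}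
    (hf : Tendsto f l (𝓝[≠] 0)) (hg : Tendsto g l (𝓝[≠] 0))
    (hfg : Tendsto (fun x => f x / g x) l (𝓝 L)) :
    Tendsto (fun x => Real.log (1 + f x) / Real.log (1 + g x)) l (𝓝 L) := by
  have hlim := ((Real.tendsto_log_one_add_div_self.comp hf).mul hfg).div
    (Real.tendsto_log_one_add_div_self.comp hg) one_ne_zero
  rw [one_mul, div_one] at hlim
  refine hlim.congr' ?_
  filter_upwards [hf.eventually eventually_mem_nhdsWithin,
    hg.eventually eventually_mem_nhdsWithin] with x (hfx : f x ≠ 0) (hgx : g x ≠ 0)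
  simp only [Pi.div_apply, Function.comp_apply]
  rcases eq_or_ne (Real.log (1 + g x)) 0 with h | h
  · simp [h]
  · field_simp

lemma eventually_add_mul_ne_zero {b : ℝ} (c : ℝ) (hb : b ≠ 0) :
    ∀ᶠ x in 𝓝 (0 : ℝ), b + c * x ≠ 0 :=
  (show ContinuousAt (fun x => b + c * x) 0 by fun_prop).eventually_ne (by simpa using hb)

lemma tendsto_mul_div_add_mul_nhdsNE {a b : ℝ} (c : ℝ) (ha : a ≠ 0) (hb : b ≠ 0) :
    Tendsto (fun x => a * x / (b + c * x)) (𝓝[≠] 0) (𝓝[≠] 0) := by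
  refine tendsto_nhdsWithin_iff.mpr ⟨?_, ?_⟩
  · have : ContinuousAt (fun x => a * x / (b + c * x)) 0 :=
      ContinuousAt.div (by fun_prop) (by fun_prop) (by simpa using hb)
    simpa using this.tendsto.mono_left nhdsWithin_le_nhds
  · filter_upwards [nhdsWithin_le_nhds (eventually_add_mul_ne_zero c hb), self_mem_nhdsWithin]
      with x hx (hx0 : x ≠ 0)
    exact div_ne_zero (mul_ne_zero ha hx0) hx

lemma tendsto_mul_div_add_mul_div_mul_div_add_mul {a b a' b' : ℝ} (c c' : ℝ)
    (hb : b ≠ 0) (ha' : a' ≠ 0) (hb' : b' ≠ 0) :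
    Tendsto (fun x => a * x / (b + c * x) / (a' * x / (b' + c' * x))) (𝓝[≠] 0)
      (𝓝 (a * b' / (b * a'))) := by
  have hcont : ContinuousAt (fun x => a * (b' + c' * x) / ((b + c * x) * a')) 0 :=
    ContinuousAt.div (by fun_prop) (by fun_prop) (by simpa using mul_ne_zero hb ha')
  have hlim := hcont.tendsto.mono_left (nhdsWithin_le_nhds (s := {0}ᶜ))
  simp only [mul_zero, add_zero] at hlim
  refine hlim.congr' ?_
  filter_upwards [nhdsWithin_le_nhds (eventually_add_mul_ne_zero c hb),
    nhdsWithin_le_nhds (eventually_add_mul_ne_zero c' hb'), self_mem_nhdsWithin]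
    with x hx hx' (hx0 : x ≠ 0)
  field_simp

lemma tendsto_log_one_add_mul_div_add_mul_div_log_one_add_mul_div_add_mul {a b a' b' : ℝ}
    (c c' : ℝ) (ha : a ≠ 0) (hb : b ≠ 0) (ha' : a' ≠ 0) (hb' : b' ≠ 0) :
    Tendsto (fun x => Real.log (1 + a * x / (b + c * x)) / Real.log (1 + a' * x / (b' + c' * x)))
      (𝓝[≠] 0) (𝓝 (a * b' / (b * a'))) :=
  tendsto_log_one_add_div_log_one_add (tendsto_mul_div_add_mul_nhdsNE c ha hb)
    (tendsto_mul_div_add_mul_nhdsNE c' ha' hb')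
    (tendsto_mul_div_add_mul_div_mul_div_add_mul c c' hb ha' hb')

theorem rate_ratio_low_relay_power_general (K : ℕ)
    (βSR βRD : Fin K → ℝ) (hβSR : ∀ j, 0 < βSR j) (hβRD : ∀ j, 0 < βRD j)
    (ES : ℝ) (hES : 0 < ES) (k : Fin K) (t : ℝ) (ht : t ∈ Set.Ioc (0 : ℝ) 1) :
    Tendsto (fun ER : ℝ =>
        Real.log (1 + ES * ER * t ^ 2 /
            (ES * t * (∑ i, βSR i ^ 2 * βRD i / (βSR k ^ 2 * βRD k ^ 2))
              + (∑ m, βSR m * βRD m) / (βSR k ^ 2 * βRD k ^ 2)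
              + ER * t * (1 / βSR k))) /
          Real.log (1 + ES * ER /
            (ES * (∑ i, βSR i ^ 2 * βRD i / (βSR k ^ 2 * βRD k ^ 2))
              + (∑ m, βSR m * βRD m) / (βSR k ^ 2 * βRD k ^ 2)
              + ER * (1 / βSR k))))
      (nhdsWithin 0 (Set.Ioi 0))
      (nhds (t ^ 2 * (ES * (∑ m, βSR m ^ 2 * βRD m) + ∑ m, βSR m * βRD m) /
        (t * ES * (∑ m, βSR m ^ 2 * βRD m) + ∑ m, βSR m * βRD m))) := by
  have ht0 : 0 < t := ht.1
  have hc : 0 < βSR k ^ 2 * βRD k ^ 2 := by have := hβSR k; have := hβRD k; positivity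
  have hS₁ : 0 < ∑ m, βSR m ^ 2 * βRD m :=
    Finset.sum_pos (fun m _ => by have := hβSR m; have := hβRD m; positivity) ⟨k, Finset.mem_univ k⟩
  have hS₂ : 0 < ∑ m, βSR m * βRD m :=
    Finset.sum_pos (fun m _ => mul_pos (hβSR m) (hβRD m)) ⟨k, Finset.mem_univ k⟩
  rw [← Finset.sum_div]
  set c := βSR k ^ 2 * βRD k ^ 2
  set S₁ := ∑ m, βSR m ^ 2 * βRD m
  set S₂ := ∑ m, βSR m * βRD m
  have hlim := tendsto_log_one_add_mul_div_add_mul_div_log_one_add_mul_div_add_mul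
    (a := ES * t ^ 2) (b := ES * t * (S₁ / c) + S₂ / c) (a' := ES) (b' := ES * (S₁ / c) + S₂ / c)
    (t * (1 / βSR k)) (1 / βSR k) (by positivity) (by positivity) hES.ne' (by positivity)
  convert hlim.mono_left (nhdsGT_le_nhdsNE 0) using 1
  · ext ER
    ring_nf
  · congr 1
    field_simp

/-- **Proposition 2.** With `t = α + ρκ ∈ (0,1]`,
`ν(E_R) = E_S E_R t²/(E_S t X + Y + E_R t Z)` the asymptotic SINR of the
mixed-ADC/DAC system and `ν_p(E_R) = E_S E_R/(E_S X + Y + E_R Z)` that of the ideal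
unquantized system, where `X = ∑ᵢ β_SR,i² β_RD,i/(β_SR,k² β_RD,k²)`,
`Y = (∑ₘ β_SR,m β_RD,m)/(β_SR,k² β_RD,k²)` and `Z = 1/β_SR,k`, the rate ratio
satisfies, as `E_R → 0⁺`,
`log(1+ν)/log(1+ν_p) → t² (E_S ∑ₘ β_SR,m² β_RD,m + ∑ₘ β_SR,m β_RD,m)
  / (t E_S ∑ₘ β_SR,m² β_RD,m + ∑ₘ β_SR,m β_RD,m)`. -/
theorem rate_ratio_low_relay_power (K : ℕ) (hK : 1 ≤ K)
    (βSR βRD : Fin K → ℝ) (hβSR : ∀ j, 0 < βSR j) (hβRD : ∀ j, 0 < βRD j)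
    (ES : ℝ) (hES : 0 < ES) (k : Fin K) (t : ℝ) (ht : t ∈ Set.Ioc (0 : ℝ) 1) :
    Tendsto (fun ER : ℝ =>
        Real.log (1 + ES * ER * t ^ 2 /
            (ES * t * (∑ i, βSR i ^ 2 * βRD i / (βSR k ^ 2 * βRD k ^ 2))
              + (∑ m, βSR m * βRD m) / (βSR k ^ 2 * βRD k ^ 2)
              + ER * t * (1 / βSR k))) /
          Real.log (1 + ES * ER /
            (ES * (∑ i, βSR i ^ 2 * βRD i / (βSR k ^ 2 * βRD k ^ 2))
              + (∑ m, βSR m * βRD m) / (βSR k ^ 2 * βRD k ^ 2)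
              + ER * (1 / βSR k))))
      (nhdsWithin 0 (Set.Ioi 0))
      (nhds (t ^ 2 * (ES * (∑ m, βSR m ^ 2 * βRD m) + ∑ m, βSR m * βRD m) /
        (t * ES * (∑ m, βSR m ^ 2 * βRD m) + ∑ m, βSR m * βRD m))) :=
  rate_ratio_low_relay_power_general K βSR βRD hβSR hβRD ES hES k t ht
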